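/- Let a be a nonzero element of GF(2^n), L a multiple of lcm(n,k), and ξ a (2^L+1)-th root of unity with ξ ≠ 1 in the algebraic closure of GF(2). Then x₀ = T_k^L(T_2(a/(ξ+1))) satisfies T_k(x₀) = a, and the full solution set of T_k(x) = a in the algebraic closure is x₀ + { y + y^2 : y ∈ GF(2^k) }. -/

import Mathlib

/-! In characteristic 2 the map `T 1 k` is additive and telescopes on `y + y ^ 2`:
`T 1 k (y + y ^ 2) = y + y ^ (2 ^ k)`. Together with `T 1 k ∘ T k L = T 1 L` this gives
`T 1 k x₀ = b + b ^ (2 ^ L)` for `b = a / (ξ + 1)`, which is `a` because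
`b ^ (2 ^ L) = a / (ξ⁻¹ + 1)`. Over an algebraically closed field every `w` is `y + y ^ 2`
for some `y`, and then `T 1 k w = y + y ^ (2 ^ k)`; so the kernel of `T 1 k` is the image
of `GF(2 ^ k)` under `y ↦ y + y ^ 2`. -/

/-- `T l k x = ∑_{i=0}^{k/l - 1} x^(2^(l*i))`, the linearized trace-like polynomial. -/
noncomputable def T {F : Type*} [Field F] (l k : ℕ) (x : F) : F :=
  ∑ i ∈ Finset.range (k / l), x ^ (2 ^ (l * i))

open Finset Polynomial

theorem Finset.sum_range_mul_eq_sum_range_sum {M : Type*} [AddCommMonoid M]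
    (f : ℕ → M) (k m : ℕ) :
    ∑ i ∈ range (k * m), f i = ∑ j ∈ range m, ∑ i ∈ range k, f (k * j + i) := by
  induction m with
  | zero => simp
  | succ m ih => rw [sum_range_succ, ← ih, Nat.mul_succ, sum_range_add]

theorem pow_pow_eq_self_of_dvd {M : Type*} [Monoid M] {a : M} {p n L : ℕ}
    (ha : a ^ p ^ n = a) (hnL : n ∣ L) : a ^ p ^ L = a := by
  obtain ⟨t, rfl⟩ := hnL
  induction t with
  | zero => simp
  | succ t ih => rw [Nat.mul_succ, pow_add, pow_mul, ih, ha]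

theorem IsAlgClosed.exists_add_sq_eq {F : Type*} [Field F] [IsAlgClosed F] (w : F) :
    ∃ y : F, y + y ^ 2 = w := by
  have hdeg : (C 1 * X ^ 2 + C 1 * X + C (-w) : F[X]).degree ≠ 0 := by
    rw [degree_quadratic one_ne_zero]; decide
  obtain ⟨y, hy⟩ := IsAlgClosed.exists_root _ hdeg
  refine ⟨y, ?_⟩
  simp only [IsRoot, eval_add, eval_mul, eval_C, eval_pow, eval_X] at hy
  linear_combination hy

section CharTwo

variable {F : Type*} [Field F] [CharP F 2]

omit [CharP F 2] in
@[simp]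
theorem T_one (k : ℕ) (x : F) : T 1 k x = ∑ i ∈ range k, x ^ 2 ^ i := by
  simp [T]

theorem T_add (l k : ℕ) (x y : F) : T l k (x + y) = T l k x + T l k y := by
  simp only [T, ← sum_add_distrib, add_pow_char_pow]

theorem T_one_add_sq (k : ℕ) (y : F) : T 1 k (y + y ^ 2) = y + y ^ 2 ^ k := by
  have hterm (i : ℕ) : (y + y ^ 2) ^ 2 ^ i = y ^ 2 ^ (i + 1) - y ^ 2 ^ i := by
    rw [add_pow_char_pow, ← pow_mul, ← pow_succ', CharTwo.sub_eq_add, add_comm]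
  rw [T_one, sum_congr rfl fun i _ => hterm i, sum_range_sub (fun i => y ^ 2 ^ i), pow_zero,
    pow_one, CharTwo.sub_eq_add, add_comm]

theorem T_one_T_of_dvd {k L : ℕ} (hkL : k ∣ L) (z : F) : T 1 k (T k L z) = T 1 L z := by
  obtain ⟨m, rfl⟩ := hkL
  rcases k.eq_zero_or_pos with rfl | hk
  · simp
  rw [T_one, T_one, T, Nat.mul_div_cancel_left m hk, sum_range_mul_eq_sum_range_sum,
    sum_comm]
  refine sum_congr rfl fun i _ => ?_
  rw [sum_pow_char_pow]
  refine sum_congr rfl fun j _ => ?_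
  rw [← pow_mul, ← pow_add]

theorem T_one_eq_zero_iff [IsAlgClosed F] (k : ℕ) (w : F) :
    T 1 k w = 0 ↔ ∃ y : F, y ^ 2 ^ k = y ∧ y + y ^ 2 = w := by
  constructor
  · intro hw
    obtain ⟨y, rfl⟩ := IsAlgClosed.exists_add_sq_eq w
    rw [T_one_add_sq, CharTwo.add_eq_zero] at hw
    exact ⟨y, hw.symm, rfl⟩
  · rintro ⟨y, hy, rfl⟩
    rw [T_one_add_sq, hy, CharTwo.add_self_eq_zero]

theorem div_add_one_add_pow_eq {L : ℕ} {a ξ : F} (ha : a ^ 2 ^ L = a)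
    (hξ : ξ ^ (2 ^ L + 1) = 1) (hξ1 : ξ ≠ 1) :
    a / (ξ + 1) + (a / (ξ + 1)) ^ 2 ^ L = a := by
  have hξ0 : ξ ≠ 0 := by rintro rfl; simp at hξ
  have hξ1' : ξ + 1 ≠ 0 := by rwa [Ne, CharTwo.add_eq_zero]
  have hξinv : ξ⁻¹ + 1 ≠ 0 := by rwa [Ne, CharTwo.add_eq_zero, inv_eq_one]
  have hξL : ξ ^ 2 ^ L = ξ⁻¹ := eq_inv_of_mul_eq_one_left (by rwa [← pow_succ])
  rw [div_pow, add_pow_char_pow, one_pow, ha, hξL, div_add_div _ _ hξ1' hξinv, div_eq_iff (mul_ne_zero hξ1' hξinv)]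
  linear_combination (-a) * mul_inv_cancel₀ hξ0

end CharTwo

theorem stmt_16_general (n k L : ℕ)
    (hnL : n ∣ L) (hkL : k ∣ L)
    (a ξ : AlgebraicClosure (ZMod 2)) (ha : a ^ (2 ^ n) = a)
    (hξ : ξ ^ (2 ^ L + 1) = 1) (hξ1 : ξ ≠ 1) :
    T 1 k (T k L (a / (ξ + 1) + (a / (ξ + 1)) ^ 2)) = a ∧
    {x : AlgebraicClosure (ZMod 2) | T 1 k x = a} =
      (fun y : AlgebraicClosure (ZMod 2) =>
          T k L (a / (ξ + 1) + (a / (ξ + 1)) ^ 2) + (y + y ^ 2)) ''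
        {y : AlgebraicClosure (ZMod 2) | y ^ (2 ^ k) = y} := by
  set x₀ := T k L (a / (ξ + 1) + (a / (ξ + 1)) ^ 2)
  have hx₀ : T 1 k x₀ = a := by
    rw [T_one_T_of_dvd hkL, T_one_add_sq,
      div_add_one_add_pow_eq (pow_pow_eq_self_of_dvd ha hnL) hξ hξ1]
  refine ⟨hx₀, Set.ext fun x => ?_⟩
  have hx : T 1 k x = T 1 k (x - x₀) + a := by rw [← hx₀, ← T_add, sub_add_cancel]
  simp only [Set.mem_ofPred_eq, Set.mem_image, hx, add_eq_right, T_one_eq_zero_iff,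
    eq_sub_iff_add_eq']

theorem stmt_16 (n k L : ℕ) (hn : 0 < n) (hk : 0 < k)
    (hnL : n ∣ L) (hkL : k ∣ L)
    (a ξ : AlgebraicClosure (ZMod 2)) (ha : a ^ (2 ^ n) = a) (ha0 : a ≠ 0)
    (hξ : ξ ^ (2 ^ L + 1) = 1) (hξ1 : ξ ≠ 1) :
    T 1 k (T k L (a / (ξ + 1) + (a / (ξ + 1)) ^ 2)) = a ∧
    {x : AlgebraicClosure (ZMod 2) | T 1 k x = a} =
      (fun y : AlgebraicClosure (ZMod 2) =>
          T k L (a / (ξ + 1) + (a / (ξ + 1)) ^ 2) + (y + y ^ 2)) ''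
        {y : AlgebraicClosure (ZMod 2) | y ^ (2 ^ k) = y} :=
  stmt_16_general n k L hnL hkL a ξ ha hξ hξ1
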